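/- arXiv:0704.2478 — 7 statements merged into one kernel-verified Lean document; each statement's English description precedes it below -/
import Mathlib

section
/- After the birational symplectic change of variables x3 = x−z, y3 = y, z3 = z, w3 = w+y, the condition α4 = β4 makes the hyperplane {x3 = 0} invariant for the transformed system; equivalently, the vector field component d(x−z)/dt of the D6^(1) system, restricted to the locus x = z, equals (2/(t(t−1)))(x−z)·(polynomial) and in particular vanishes when x = z and α4 = β4. -/
/-!
On the diagonal `x = z` the `y`- and `w`-terms of the two numerators cancel, so
`t (t - 1) d(x - z)/dt` there is the quadratic
`(β0 - α0) (x - 1) x + (β3 + 2 β2 - α3) (x - t) x + (β4 - α4) (x - t) (x - 1)`.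
With `α4 = β4`, the relation for `α4` reads `α0 + α1 + 2 α2 + 2 β2 + β3 = 1 - β4`, which
turns the relations for `β0` and `α3` into `β0 = α0` and `α3 = β3 + 2 β2`; so all three
coefficients vanish.
-/

section Numerators

variable {R : Type*} [CommRing R]

/-- The numerator of `dx/dt`, i.e. `t (t - 1) dx/dt`. -/
def d6NumX (t x y z w α0 α3 α4 β2 : R) : R :=
  2*y*(x-t)*(x-1)*x - (α0-1)*(x-1)*x - α3*(x-t)*x - α4*(x-t)*(x-1)
    + 2*(x-t)*z*((z-1)*w + β2)

/-- The numerator of `dz/dt`, i.e. `t (t - 1) dz/dt`. -/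
def d6NumZ (t x y z w β0 β3 β4 : R) : R :=
  2*w*(z-t)*(z-1)*z - (β0-1)*(z-1)*z - β3*(z-t)*z - β4*(z-t)*(z-1)
    + 2*(x-t)*y*z*(z-1)

theorem d6NumX_sub_d6NumZ_diagonal (t x y w α0 α3 α4 β0 β2 β3 β4 : R) :
    d6NumX t x y x w α0 α3 α4 β2 - d6NumZ t x y x w β0 β3 β4 =
      (β0 - α0)*(x-1)*x + (β3 + 2*β2 - α3)*(x-t)*x + (β4 - α4)*(x-t)*(x-1) := by
  unfold d6NumX d6NumZ
  ring

end Numerators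

section Parameters

variable {K : Type*} [Field K] [CharZero K] {α0 α1 α2 α3 α4 β0 β2 β3 β4 : K}

theorem d6_beta0_eq_alpha0_of_alpha4_eq_beta4
    (hα4 : α4 = (1 - α0 - α1 - 2*α2 - 2*β2 - β3 + β4)/2)
    (hβ0 : β0 = (1 + α0 - α1 - 2*α2 - 2*β2 - β3 - β4)/2)
    (h44 : α4 = β4) : β0 = α0 := by
  subst hβ0 h44
  linear_combination -hα4

theorem d6_alpha3_eq_of_alpha4_eq_beta4
    (hα3 : α3 = (1 - α0 - α1 - 2*α2 + 2*β2 + β3 - β4)/2)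
    (hα4 : α4 = (1 - α0 - α1 - 2*α2 - 2*β2 - β3 + β4)/2)
    (h44 : α4 = β4) : α3 = β3 + 2*β2 := by
  subst hα3 h44
  linear_combination -hα4

end Parameters

theorem x_eq_z_invariant_of_alpha4_eq_beta4_general
    (t x y z w α0 α1 α2 α3 α4 β0 β2 β3 β4 : ℂ)
    (hα3 : α3 = (1 - α0 - α1 - 2*α2 + 2*β2 + β3 - β4)/2)
    (hα4 : α4 = (1 - α0 - α1 - 2*α2 - 2*β2 - β3 + β4)/2)
    (hβ0 : β0 = (1 + α0 - α1 - 2*α2 - 2*β2 - β3 - β4)/2)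
    (h44 : α4 = β4) (hxz : x = z) :
    (1/(t*(t-1))) *
      (2*y*(x-t)*(x-1)*x - (α0-1)*(x-1)*x - α3*(x-t)*x - α4*(x-t)*(x-1)
        + 2*(x-t)*z*((z-1)*w + β2))
      =
    (1/(t*(t-1))) *
      (2*w*(z-t)*(z-1)*z - (β0-1)*(z-1)*z - β3*(z-t)*z - β4*(z-t)*(z-1)
        + 2*(x-t)*y*z*(z-1)) := by
  have hβ0α0 := d6_beta0_eq_alpha0_of_alpha4_eq_beta4 hα4 hβ0 h44
  have hα3β3 := d6_alpha3_eq_of_alpha4_eq_beta4 hα3 hα4 h44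
  subst hxz
  change _ * d6NumX t x y x w α0 α3 α4 β2 = _ * d6NumZ t x y x w β0 β3 β4
  congr 1
  rw [← sub_eq_zero, d6NumX_sub_d6NumZ_diagonal, hβ0α0, hα3β3, h44]
  ring

/-- When `α4 = β4` (and the parameters `α3, β0, β1` are given by the relations (5)),
the locus `{x = z}` is invariant for the `D₆⁽¹⁾` system: the right-hand sides of
`dx/dt` and `dz/dt` agree on `x = z`, i.e. `d(x-z)/dt` vanishes there. -/
theorem x_eq_z_invariant_of_alpha4_eq_beta4
    (t x y z w α0 α1 α2 α3 α4 β0 β1 β2 β3 β4 : ℂ)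
    (hα3 : α3 = (1 - α0 - α1 - 2*α2 + 2*β2 + β3 - β4)/2)
    (hα4 : α4 = (1 - α0 - α1 - 2*α2 - 2*β2 - β3 + β4)/2)
    (hβ0 : β0 = (1 + α0 - α1 - 2*α2 - 2*β2 - β3 - β4)/2)
    (hβ1 : β1 = (1 - α0 + α1 + 2*α2 - 2*β2 - β3 - β4)/2)
    (h44 : α4 = β4) (hxz : x = z) :
    (1/(t*(t-1))) *
      (2*y*(x-t)*(x-1)*x - (α0-1)*(x-1)*x - α3*(x-t)*x - α4*(x-t)*(x-1)
        + 2*(x-t)*z*((z-1)*w + β2))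
      =
    (1/(t*(t-1))) *
      (2*w*(z-t)*(z-1)*z - (β0-1)*(z-1)*z - β3*(z-t)*z - β4*(z-t)*(z-1)
        + 2*(x-t)*y*z*(z-1)) :=
  x_eq_z_invariant_of_alpha4_eq_beta4_general t x y z w α0 α1 α2 α3 α4 β0 β2 β3 β4 hα3 hα4 hβ0 h44
    hxz
end

section
/- The composite translation operator T1 = π1 s5 s4 s3 s2 s1 s0 s2 s3 s4 s5 acts on the parameter vector by T1(α0,α1,α2,γ1,β2,β3,β4) = (α0,α1,α2,γ1,β2,β3−1,β4+1). -/
/-- Parameter space `ℂ⁷` with coordinates `(α0,α1,α2,γ1,β2,β3,β4)`. -/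
abbrev Par7 := ℂ × ℂ × ℂ × ℂ × ℂ × ℂ × ℂ

def S0p : Par7 → Par7 := fun p => match p with
  | (a0, a1, a2, g1, b2, b3, b4) => (-a0, a1, a2 + a0, g1, b2, b3, b4)
def S1p : Par7 → Par7 := fun p => match p with
  | (a0, a1, a2, g1, b2, b3, b4) => (a0, -a1, a2 + a1, g1, b2, b3, b4)
def S2p : Par7 → Par7 := fun p => match p with
  | (a0, a1, a2, g1, b2, b3, b4) => (a0 + a2, a1 + a2, -a2, g1 + a2, b2, b3, b4)
def S3p : Par7 → Par7 := fun p => match p with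
  | (a0, a1, a2, g1, b2, b3, b4) => (a0, a1, a2 + g1, -g1, b2 + g1, b3, b4)
def S4p : Par7 → Par7 := fun p => match p with
  | (a0, a1, a2, g1, b2, b3, b4) => (a0, a1, a2, g1 + b2, -b2, b3 + b2, b4 + b2)
def S5p : Par7 → Par7 := fun p => match p with
  | (a0, a1, a2, g1, b2, b3, b4) => (a0, a1, a2, g1, b2 + b3, -b3, b4)
def Pi1p : Par7 → Par7 := fun p => match p with
  | (a0, a1, a2, g1, b2, b3, b4) => (a1, a0, a2, g1, b2, b4, b3)

/-- The translation operator `T₁ = π₁ s₅ s₄ s₃ s₂ s₁ s₀ s₂ s₃ s₄ s₅`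
(the word is applied to a parameter vector with the leftmost factor acting first). -/
def T1p : Par7 → Par7 :=
  S5p ∘ S4p ∘ S3p ∘ S2p ∘ S0p ∘ S1p ∘ S2p ∘ S3p ∘ S4p ∘ S5p ∘ Pi1p

/-!
Composed on all of `ℂ⁷`, the reflections and `π₁` give the linear map that fixes every
coordinate except `β₃, β₄` and shifts these by `∓δ`, with `δ` the null root; on the
normalized hyperplane `δ = 1` this is the translation.
-/

/-- The null root of the affine root system `D₆⁽¹⁾` in the coordinates `(α0,α1,α2,γ1,β2,β3,β4)`. -/
def nullRoot : Par7 → ℂ := fun p => match p with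
  | (a0, a1, a2, g1, b2, b3, b4) => a0 + a1 + 2*a2 + 2*g1 + 2*b2 + b3 + b4

theorem T1p_apply (a0 a1 a2 g1 b2 b3 b4 : ℂ) :
    T1p (a0, a1, a2, g1, b2, b3, b4) =
      (a0, a1, a2, g1, b2, b3 - nullRoot (a0, a1, a2, g1, b2, b3, b4),
        b4 + nullRoot (a0, a1, a2, g1, b2, b3, b4)) := by
  simp only [T1p, Function.comp_apply, Pi1p, S5p, S4p, S3p, S2p, S1p, S0p, nullRoot,
    Prod.mk.injEq]
  refine ⟨?_, ?_, ?_, ?_, ?_, ?_, ?_⟩ <;> ring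

/-- `T₁` acts on the parameters, subject to the `D₆⁽¹⁾` normalization
`α0+α1+2α2+2γ1+2β2+β3+β4 = 1`, by the translation `(0,0,0,0,0,-1,1)`. -/
theorem T1_translation (a0 a1 a2 g1 b2 b3 b4 : ℂ)
    (hrel : a0 + a1 + 2*a2 + 2*g1 + 2*b2 + b3 + b4 = 1) :
    T1p (a0, a1, a2, g1, b2, b3, b4) = (a0, a1, a2, g1, b2, b3 - 1, b4 + 1) := by
  rw [T1p_apply, nullRoot, hrel]
end

section
/- The translation operators T2 = s4 s6 T1 s6 s4 and T3 = s6 T1 s6 (with T1 = π1 s5 s4 s3 s2 s1 s0 s2 s3 s4 s5) act on parameters by adding (0,0,0,1,−1,0,0) and (0,0,0,0,1,−1,−1) respectively to (α0,α1,α2,γ1,β2,β3,β4). -/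
def S6p : Par7 → Par7 := fun p => match p with
  | (a0, a1, a2, g1, b2, b3, b4) => (a0, a1, a2, g1, b2 + b4, b3, -b4)
/-- `T₂ = s₄ s₆ T₁ s₆ s₄`. -/
def T2p : Par7 → Par7 := S4p ∘ S6p ∘ T1p ∘ S6p ∘ S4p

/-- `T₃ = s₆ T₁ s₆`. -/
def T3p : Par7 → Par7 := S6p ∘ T1p ∘ S6p

section Translation

variable {R M : Type*} [CommRing R] [AddCommGroup M] [Module R M]

theorem LinearMap.conj_translation_apply (σ : M →ₗ[R] M) (hσ : Function.Involutive σ)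
    {δ : M → R} (hδ : ∀ p, δ (σ p) = δ p) {f : M → M} {v : M} (hf : ∀ p, f p = p + δ p • v)
    (p : M) : (σ ∘ f ∘ σ) p = p + δ p • σ v := by
  simp only [Function.comp_apply, hf, map_add, map_smul, hσ p, hδ]

end Translation

def S4l : Par7 →ₗ[ℂ] Par7 where
  toFun := S4p
  map_add' := by
    rintro ⟨_, _, _, _, _, _, _⟩ ⟨_, _, _, _, _, _, _⟩
    simp only [S4p, Prod.mk_add_mk]
    ext <;> dsimp only <;> ring
  map_smul' := by
    rintro _ ⟨_, _, _, _, _, _, _⟩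
    simp only [S4p, Prod.smul_mk, smul_eq_mul, RingHom.id_apply]
    ext <;> dsimp only <;> ring

def S6l : Par7 →ₗ[ℂ] Par7 where
  toFun := S6p
  map_add' := by
    rintro ⟨_, _, _, _, _, _, _⟩ ⟨_, _, _, _, _, _, _⟩
    simp only [S6p, Prod.mk_add_mk]
    ext <;> dsimp only <;> ring
  map_smul' := by
    rintro _ ⟨_, _, _, _, _, _, _⟩
    simp only [S6p, Prod.smul_mk, smul_eq_mul, RingHom.id_apply]
    ext <;> dsimp only <;> ring

theorem S4p_involutive : Function.Involutive S4p := by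
  rintro ⟨_, _, _, _, _, _, _⟩
  simp only [S4p]
  ext <;> dsimp only <;> ring

theorem S6p_involutive : Function.Involutive S6p := by
  rintro ⟨_, _, _, _, _, _, _⟩
  simp only [S6p]
  ext <;> dsimp only <;> ring

theorem nullRoot_S4p (p : Par7) : nullRoot (S4p p) = nullRoot p := by
  obtain ⟨_, _, _, _, _, _, _⟩ := p
  simp only [nullRoot, S4p]
  ring

theorem nullRoot_S6p (p : Par7) : nullRoot (S6p p) = nullRoot p := by
  obtain ⟨_, _, _, _, _, _, _⟩ := p
  simp only [nullRoot, S6p]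
  ring

theorem T1p_apply_s13 (p : Par7) : T1p p = p + nullRoot p • (0, 0, 0, 0, 0, -1, 1) := by
  obtain ⟨_, _, _, _, _, _, _⟩ := p
  simp only [T1p, Function.comp_apply, S0p, S1p, S2p, S3p, S4p, S5p, Pi1p, nullRoot,
    Prod.smul_mk, Prod.mk_add_mk, smul_eq_mul]
  ext <;> dsimp only <;> ring

theorem T3p_apply (p : Par7) : T3p p = p + nullRoot p • (0, 0, 0, 0, 1, -1, -1) := by
  rw [show T3p = S6l ∘ T1p ∘ S6l from rfl,
    S6l.conj_translation_apply S6p_involutive nullRoot_S6p T1p_apply_s13]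
  norm_num [S6l, S6p]

theorem T2p_apply (p : Par7) : T2p p = p + nullRoot p • (0, 0, 0, 1, -1, 0, 0) := by
  rw [show T2p = S4l ∘ T3p ∘ S4l from rfl,
    S4l.conj_translation_apply S4p_involutive nullRoot_S4p T3p_apply]
  norm_num [S4l, S4p]

/-- Subject to the `D₆⁽¹⁾` normalization `α0+α1+2α2+2γ1+2β2+β3+β4 = 1`,
the operators `T₂` and `T₃` act on the parameters by the translations
`(0,0,0,1,-1,0,0)` and `(0,0,0,0,1,-1,-1)` respectively. -/
theorem T2_T3_translations (a0 a1 a2 g1 b2 b3 b4 : ℂ)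
    (hrel : a0 + a1 + 2*a2 + 2*g1 + 2*b2 + b3 + b4 = 1) :
    T2p (a0, a1, a2, g1, b2, b3, b4) = (a0, a1, a2, g1 + 1, b2 - 1, b3, b4) ∧
    T3p (a0, a1, a2, g1, b2, b3, b4) = (a0, a1, a2, g1, b2 + 1, b3 - 1, b4 - 1) := by
  have hδ : nullRoot (a0, a1, a2, g1, b2, b3, b4) = 1 := hrel
  rw [T2p_apply, T3p_apply, hδ, one_smul, one_smul]
  simp [sub_eq_add_neg]
end

section
/- The transformations g1, g2, g3, g4 on (x,y,z,w;α1,α2,α3,α4), given by g1: z ↦ z+α1/w with (α1,α2,α4)↦(−α1,α2+α1,α4+α1); g2: w ↦ w−α2/z with (α1,α2)↦(α1+α2,−α2); g3: x ↦ x+α3/y with (α3,α4)↦(−α3,α4+α3); g4: y ↦ y−α4/(x−z), w ↦ w+α4/(x−z) with (α1,α3,α4)↦(α1+α4,α3+α4,−α4), satisfy the defining relations of the classical Weyl group of type A4 on the parameter space: each gi² = id, (g1g2)³ = (g3g4)³ = (g1g4)³ = id as parameter actions, and nonadjacent pairs commute (g1g3 = g3g1, g2g3 = g3g2, g2g4 =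 g4g2). -/
/-- Parameter space `ℂ⁴` with coordinates `(α1,α2,α3,α4)`. -/
abbrev Par4 := ℂ × ℂ × ℂ × ℂ

/-- Parameter action of `g₁`. -/
def G1 : Par4 → Par4 := fun p => match p with
  | (a1, a2, a3, a4) => (-a1, a2 + a1, a3, a4 + a1)

/-- Parameter action of `g₂`. -/
def G2 : Par4 → Par4 := fun p => match p with
  | (a1, a2, a3, a4) => (a1 + a2, -a2, a3, a4)

/-- Parameter action of `g₃`. -/
def G3 : Par4 → Par4 := fun p => match p with
  | (a1, a2, a3, a4) => (a1, a2, -a3, a4 + a3)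

/-- Parameter action of `g₄`. -/
def G4 : Par4 → Par4 := fun p => match p with
  | (a1, a2, a3, a4) => (a1 + a4, a2, a3 + a4, -a4)

/-! Each `Gᵢ` is the simple reflection `αⱼ ↦ αⱼ - aᵢⱼ αᵢ` for the Cartan matrix of `A₄`, so every
relation is a linear identity that can be checked coordinatewise. -/

theorem G1_involutive : Function.Involutive G1 := by
  rintro ⟨a1, a2, a3, a4⟩
  ext <;> simp only [G1] <;> ring

theorem G2_involutive : Function.Involutive G2 := by
  rintro ⟨a1, a2, a3, a4⟩
  ext <;> simp only [G2] <;> ring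

theorem G3_involutive : Function.Involutive G3 := by
  rintro ⟨a1, a2, a3, a4⟩
  ext <;> simp only [G3] <;> ring

theorem G4_involutive : Function.Involutive G4 := by
  rintro ⟨a1, a2, a3, a4⟩
  ext <;> simp only [G4] <;> ring

theorem G1_G2_braid : (G1 ∘ G2) ∘ (G1 ∘ G2) ∘ (G1 ∘ G2) = id := by
  ext ⟨a1, a2, a3, a4⟩ <;> simp only [G1, G2, Function.comp_apply, id] <;> ring

theorem G3_G4_braid : (G3 ∘ G4) ∘ (G3 ∘ G4) ∘ (G3 ∘ G4) = id := by
  ext ⟨a1, a2, a3, a4⟩ <;> simp only [G3, G4, Function.comp_apply, id] <;> ring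

theorem G1_G4_braid : (G1 ∘ G4) ∘ (G1 ∘ G4) ∘ (G1 ∘ G4) = id := by
  ext ⟨a1, a2, a3, a4⟩ <;> simp only [G1, G4, Function.comp_apply, id] <;> ring

theorem G1_comm_G3 : G1 ∘ G3 = G3 ∘ G1 := by
  ext ⟨a1, a2, a3, a4⟩ <;> simp only [G1, G3, Function.comp_apply]
  ring

theorem G2_comm_G3 : G2 ∘ G3 = G3 ∘ G2 :=
  rfl

theorem G2_comm_G4 : G2 ∘ G4 = G4 ∘ G2 := by
  ext ⟨a1, a2, a3, a4⟩ <;> simp only [G2, G4, Function.comp_apply]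
  ring

/-- The parameter actions of `g₁, g₂, g₃, g₄` satisfy the defining relations of
the classical Weyl group of type `A₄` (Dynkin diagram `α2—α1—α4—α3`):
each `gᵢ² = id`, braid relations `(g₁g₂)³ = (g₃g₄)³ = (g₁g₄)³ = id`, and
nonadjacent pairs commute. -/
theorem g_weyl_A4_relations :
    (G1 ∘ G1 = id) ∧ (G2 ∘ G2 = id) ∧ (G3 ∘ G3 = id) ∧ (G4 ∘ G4 = id) ∧
    ((G1 ∘ G2) ∘ (G1 ∘ G2) ∘ (G1 ∘ G2) = id) ∧
    ((G3 ∘ G4) ∘ (G3 ∘ G4) ∘ (G3 ∘ G4) = id) ∧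
    ((G1 ∘ G4) ∘ (G1 ∘ G4) ∘ (G1 ∘ G4) = id) ∧
    (G1 ∘ G3 = G3 ∘ G1) ∧ (G2 ∘ G3 = G3 ∘ G2) ∧ (G2 ∘ G4 = G4 ∘ G2) :=
  ⟨G1_involutive.comp_self, G2_involutive.comp_self, G3_involutive.comp_self,
    G4_involutive.comp_self, G1_G2_braid, G3_G4_braid, G1_G4_braid, G1_comm_G3, G2_comm_G3,
    G2_comm_G4⟩
end

section
/- The degeneration substitution for Painlevé VI → V is symplectic: the change of variables (x,y) ↦ (X,Y) defined by x = X/(X−T) and y = −(X−T)((X−T)Y + A1)/T satisfies dy∧dx = dY∧dX on the open set {X ≠ T}, for any complex constants T ≠ 0 and A1. -/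
section

variable {𝕜 : Type*} [NontriviallyNormedField 𝕜]

theorem hasDerivAt_div_sub_const {T x : 𝕜} (hx : x - T ≠ 0) :
    HasDerivAt (fun x' => x' / (x' - T)) (-T / (x - T) ^ 2) x := by
  refine ((hasDerivAt_id x).div ((hasDerivAt_id x).sub_const T) hx).congr_deriv ?_
  simp only [id]
  ring

theorem hasDerivAt_neg_mul_affine_div (c a T y : 𝕜) :
    HasDerivAt (fun y' => -(c * (c * y' + a)) / T) (-(c * c) / T) y := by
  refine ((((hasDerivAt_id y).const_mul c).add_const a).const_mul c).neg.div_const T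
    |>.congr_deriv ?_
  ring

end

/-- The degeneration substitution from Painlevé VI to Painlevé V,
`x = X/(X-T)`, `y = -(X-T)((X-T)Y + A1)/T`, is symplectic: the Jacobian
determinant of `(X,Y) ↦ (x,y)` equals `1` on `{X ≠ T}`, i.e. `dy∧dx = dY∧dX`. -/
theorem degeneration_substitution_symplectic (T A1 X Y : ℂ)
    (hT : T ≠ 0) (hX : X ≠ T) :
    (deriv (fun X' => X'/(X' - T)) X) *
      (deriv (fun Y' => -((X - T)*((X - T)*Y' + A1))/T) Y)
    - (deriv (fun _Y' => X/(X - T)) Y) *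
      (deriv (fun X' => -((X' - T)*((X' - T)*Y + A1))/T) X) = 1 := by
  have hXT : X - T ≠ 0 := sub_ne_zero.mpr hX
  rw [(hasDerivAt_div_sub_const hXT).deriv, (hasDerivAt_neg_mul_affine_div _ A1 T Y).deriv,
    deriv_const]
  field_simp
  ring
end

section
/- In the A5^(1) system, the composite S5 := s5 s4 s3 s2 s0 s2 s3 s4 s5 of the D6^(1) Bäcklund parameter actions acts on the parameters (A0,A1,A2,A3,A4,A5) := (α1, α2, α4−β4, β2, β4, 1−α1−α2−α4−β2) as the simple reflection in A5: S5(A0,…,A5) = (A0+A5, A1, A2, A3, A4+A5, −A5). -/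
/-- The composite `S₅ := s₅ s₄ s₃ s₂ s₀ s₂ s₃ s₄ s₅` of the `D₆⁽¹⁾` Bäcklund
parameter actions (the word is a palindrome, so the order of application is
immaterial). -/
def S5comp : Par7 → Par7 :=
  S5p ∘ S4p ∘ S3p ∘ S2p ∘ S0p ∘ S2p ∘ S3p ∘ S4p ∘ S5p

/- `S5comp` is the conjugate of `s₀` by `s₅s₄s₃s₂`, hence the reflection in the root
`α0 + α2 + γ1 + β2 + β3`: it shifts the parameters by multiples of that root's value.
Under the normalization this value is exactly `A5`. -/
theorem S5comp_apply (a0 a1 a2 g1 b2 b3 b4 : ℂ) :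
    S5comp (a0, a1, a2, g1, b2, b3, b4) =
      (a0 - (a0 + a2 + g1 + b2 + b3), a1 + (a0 + a2 + g1 + b2 + b3), a2, g1, b2,
        b3 - (a0 + a2 + g1 + b2 + b3), b4 + (a0 + a2 + g1 + b2 + b3)) := by
  simp only [S5comp, S5p, S4p, S3p, S2p, S0p, Function.comp_apply, Prod.mk.injEq]
  refine ⟨by ring, by ring, by ring, by ring, by ring, by ring, by ring⟩

/-- In the `A₅⁽¹⁾` parameters
`(A0,A1,A2,A3,A4,A5) = (α1, α2, α4-β4, β2, β4, 1-α1-α2-α4-β2)` (note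
`α4 = γ1 + β4`), and subject to the `D₆⁽¹⁾` normalization, the composite
`S₅ = s₅s₄s₃s₂s₀s₂s₃s₄s₅` acts as the simple `A₅` reflection
`(A0,…,A5) ↦ (A0+A5, A1, A2, A3, A4+A5, -A5)`. -/
theorem S5comp_is_A5_reflection (a0 a1 a2 g1 b2 b3 b4 : ℂ)
    (hrel : a0 + a1 + 2*a2 + 2*g1 + 2*b2 + b3 + b4 = 1) :
    (let A5 : ℂ := 1 - a1 - a2 - (g1 + b4) - b2
     let q := S5comp (a0, a1, a2, g1, b2, b3, b4)
     -- q = (α0', α1', α2', γ1', β2', β3', β4'); read off the A-parameters: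
     q.2.1 = a1 + A5 ∧                      -- A0' = A0 + A5
     q.2.2.1 = a2 ∧                         -- A1' = A1
     q.2.2.2.1 = g1 ∧                       -- A2' = A2
     q.2.2.2.2.1 = b2 ∧                     -- A3' = A3
     q.2.2.2.2.2.2 = b4 + A5 ∧              -- A4' = A4 + A5
     1 - q.2.1 - q.2.2.1 - (q.2.2.2.1 + q.2.2.2.2.2.2) - q.2.2.2.2.1 = -A5) := by
  have hroot : a0 + a2 + g1 + b2 + b3 = 1 - a1 - a2 - (g1 + b4) - b2 := by
    linear_combination hrel
  dsimp only
  rw [S5comp_apply, hroot]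
  exact ⟨rfl, rfl, rfl, rfl, rfl, by ring⟩
end

section
/- For the Hamiltonian K = a1 x³y² + a2 x²y³ + a3 x²y² + a4 x²y + a5 xy² + a6 xy − (γ2 a5 + γ2² a2) y + (γ1 a4 − γ1² a1) x, the associated Hamiltonian vector field dx/dt = ∂K/∂y, dy/dt = −∂K/∂x remains polynomial in the coordinates (x2,y2) = (−(xy−γ2)y, 1/y): when rewritten in (x2,y2), both dx2/dt and dy2/dt are polynomials in x2, y2. -/
/-- The degree-5 Hamiltonian `K` of Proposition 7.1. -/
noncomputable def Kham (a1 a2 a3 a4 a5 a6 γ1 γ2 x y : ℂ) : ℂ :=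
  a1*x^3*y^2 + a2*x^2*y^3 + a3*x^2*y^2 + a4*x^2*y + a5*x*y^2 + a6*x*y
    - (γ2*a5 + γ2^2*a2)*y + (γ1*a4 - γ1^2*a1)*x

/-!
On the chart `y ≠ 0` we have `y = 1/y₂` and `xy = γ2 - x₂y₂`, so each component of the vector
field is a polynomial in `u = xy`, `y₂` and `1/y₂`. The negative powers of `y₂` cancel because
the linear term `-(γ2 a5 + γ2² a2) y` of `K` completes them to multiples of `xy - γ2 = -x₂y₂`;
e.g. the `a2`-part of `dx₂/dt` is `a2 y² (xy - γ2)² = a2 x₂²`, and its `a5`-part vanishes.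
-/

open MvPolynomial

section ChartPolynomials

variable {R : Type*} [CommRing R]

/-- The polynomial `xy = γ2 - x₂y₂` on the chart `(x₂, y₂)`. -/
noncomputable def chartXY (γ2 : R) : MvPolynomial (Fin 2) R :=
  C γ2 - X 0 * X 1

noncomputable def chartFieldX (a1 a2 a3 a4 a6 γ1 γ2 : R) : MvPolynomial (Fin 2) R :=
  C a1 * chartXY γ2 ^ 2 * (4 * chartXY γ2 - 3 * C γ2) + C a2 * X 0 ^ 2
    - 2 * C a3 * chartXY γ2 * X 0 + C a4 * chartXY γ2 * (3 * chartXY γ2 - 2 * C γ2)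
    - C a6 * X 0 + C (γ1 * a4 - γ1 ^ 2 * a1) * (2 * chartXY γ2 - C γ2)

noncomputable def chartFieldY (a1 a2 a3 a4 a5 a6 γ1 γ2 : R) : MvPolynomial (Fin 2) R :=
  3 * C a1 * chartXY γ2 ^ 2 * X 1 ^ 2 + 2 * C a2 * chartXY γ2 + 2 * C a3 * chartXY γ2 * X 1
    + 2 * C a4 * chartXY γ2 * X 1 ^ 2 + C a5 + C a6 * X 1 + C (γ1 * a4 - γ1 ^ 2 * a1) * X 1 ^ 2

end ChartPolynomials

section ChartIdentities

variable {F : Type*} [Field F] (a1 a2 a3 a4 a5 a6 γ1 γ2 : F) {x y : F}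

theorem eval_chartFieldX (hy : y ≠ 0) :
    -y ^ 2 * (2*a1*x^3*y + 3*a2*x^2*y^2 + 2*a3*x^2*y + a4*x^2 + 2*a5*x*y + a6*x
        - (γ2*a5 + γ2^2*a2))
      + (2*x*y - γ2) * (3*a1*x^2*y^2 + 2*a2*x*y^3 + 2*a3*x*y^2 + 2*a4*x*y + a5*y^2 + a6*y
        + (γ1*a4 - γ1^2*a1))
      = eval ![-((x*y - γ2)*y), 1/y] (chartFieldX a1 a2 a3 a4 a6 γ1 γ2) := by
  simp only [chartFieldX, chartXY, map_add, map_sub, map_mul, map_pow, map_ofNat, eval_C, eval_X,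
    Matrix.cons_val_zero, Matrix.cons_val_one, Matrix.cons_val_fin_one]
  field_simp
  ring

theorem eval_chartFieldY (hy : y ≠ 0) :
    (3*a1*x^2*y^2 + 2*a2*x*y^3 + 2*a3*x*y^2 + 2*a4*x*y + a5*y^2 + a6*y + (γ1*a4 - γ1^2*a1)) / y^2
      = eval ![-((x*y - γ2)*y), 1/y] (chartFieldY a1 a2 a3 a4 a5 a6 γ1 γ2) := by
  simp only [chartFieldY, chartXY, map_add, map_sub, map_mul, map_pow, map_ofNat, eval_C, eval_X,
    Matrix.cons_val_zero, Matrix.cons_val_one, Matrix.cons_val_fin_one]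
  field_simp
  ring

end ChartIdentities

section Derivatives

variable (a1 a2 a3 a4 a5 a6 γ1 γ2 x y : ℂ)

theorem deriv_Kham_fst :
    deriv (fun x' => Kham a1 a2 a3 a4 a5 a6 γ1 γ2 x' y) x
      = 3*a1*x^2*y^2 + 2*a2*x*y^3 + 2*a3*x*y^2 + 2*a4*x*y + a5*y^2 + a6*y
        + (γ1*a4 - γ1^2*a1) := by
  unfold Kham
  simp (disch := fun_prop) only [deriv_fun_add, deriv_fun_sub, deriv_fun_mul, deriv_fun_pow,
    deriv_const_mul_id', deriv_const', deriv_id'']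
  ring

theorem deriv_Kham_snd :
    deriv (fun y' => Kham a1 a2 a3 a4 a5 a6 γ1 γ2 x y') y
      = 2*a1*x^3*y + 3*a2*x^2*y^2 + 2*a3*x^2*y + a4*x^2 + 2*a5*x*y + a6*x
        - (γ2*a5 + γ2^2*a2) := by
  unfold Kham
  simp (disch := fun_prop) only [deriv_fun_add, deriv_fun_sub, deriv_fun_mul, deriv_fun_pow,
    deriv_const_mul_id', deriv_const', deriv_id'']
  ring

end Derivatives

/-- Holomorphy of the Hamiltonian vector field of `K` in the blown-up coordinates
`(x₂,y₂) = (-(xy-γ2)y, 1/y)`: the components `dx₂/dt` and `dy₂/dt` of the vector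
field `ẋ = ∂K/∂y, ẏ = -∂K/∂x`, pushed forward to the new chart, are polynomial
functions of `(x₂,y₂)`. -/
theorem K_polynomial_in_blowup_chart (a1 a2 a3 a4 a5 a6 γ1 γ2 : ℂ) :
    ∃ P Q : MvPolynomial (Fin 2) ℂ, ∀ x y : ℂ, y ≠ 0 →
      -- dx₂/dt = (∂x₂/∂x)·(∂K/∂y) + (∂x₂/∂y)·(-∂K/∂x) is polynomial in (x₂,y₂):
      ((deriv (fun x' => -((x'*y - γ2)*y)) x) *
          (deriv (fun y' => Kham a1 a2 a3 a4 a5 a6 γ1 γ2 x y') y)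
        + (deriv (fun y' => -((x*y' - γ2)*y')) y) *
          (-(deriv (fun x' => Kham a1 a2 a3 a4 a5 a6 γ1 γ2 x' y) x))
        = MvPolynomial.eval ![-((x*y - γ2)*y), 1/y] P) ∧
      -- dy₂/dt = (∂y₂/∂y)·(-∂K/∂x) is polynomial in (x₂,y₂):
      ((deriv (fun y' => 1/y') y) *
          (-(deriv (fun x' => Kham a1 a2 a3 a4 a5 a6 γ1 γ2 x' y) x))
        = MvPolynomial.eval ![-((x*y - γ2)*y), 1/y] Q) := by
  refine ⟨chartFieldX a1 a2 a3 a4 a6 γ1 γ2, chartFieldY a1 a2 a3 a4 a5 a6 γ1 γ2,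
    fun x y hy => ?_⟩
  have hx₂x : deriv (fun x' => -((x'*y - γ2)*y)) x = -y ^ 2 := by
    simp only [deriv.fun_neg', deriv_mul_const_field', deriv_sub_const, deriv_id'']
    ring
  have hx₂y : deriv (fun y' => -((x*y' - γ2)*y')) y = -(2*x*y - γ2) := by
    simp (disch := fun_prop) only [deriv.fun_neg', deriv_fun_mul, deriv_fun_sub, deriv_const_mul_id',
      deriv_const', deriv_id'']
    ring
  have hy₂y : deriv (fun y' : ℂ => 1/y') y = -(y ^ 2)⁻¹ := by
    simp only [one_div, deriv_inv']
  rw [hx₂x, hx₂y, hy₂y, deriv_Kham_fst, deriv_Kham_snd]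
  constructor
  · linear_combination eval_chartFieldX a1 a2 a3 a4 a5 a6 γ1 γ2 hy
  · linear_combination eval_chartFieldY a1 a2 a3 a4 a5 a6 γ1 γ2 hy
end
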